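/- arXiv:1910.02835 — 5 statements merged into one kernel-verified Lean document; each statement's English description precedes it below -/
import Mathlib

section
/- If the set of unviable states S_U is nonempty with n = |S_U| and n ≥ 1, then for every integer i with 1 ≤ i ≤ L, where L is the maximum over s ∈ S_U of the length of the longest trajectory from s, there exists a state s ∈ S_U whose longest trajectory has length exactly i. -/
/-!
A trajectory that stays among the unviable states never revisits a state: a repeated state
would close a loop, and the states on that loop form a viability-invariant set, hence lie in
the viability kernel. So trajectory lengths are bounded by `|S|` and `lenU` is attained.
Moreover, the longest trajectories from `s` are exactly the longest trajectories from some
successor `T s a`, prolonged by one step; hence if `lenU s = k + 1 ≥ 2`, some unviable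
successor has `lenU = k`. Descending from a state of maximal `lenU` realises every length
between `1` and the maximum.
-/

/-- The trajectory induced by deterministic dynamics `T`, start state `s0` and actions `act`. -/
def trajFrom {S A : Type*} (T : S → A → S) (s0 : S) (act : ℕ → A) : ℕ → S
  | 0 => s0
  | i + 1 => T (trajFrom T s0 act i) (act i)

/-- A set `K` avoiding the failure set `SF` is viability-invariant if every state in `K`
admits an action keeping the system in `K`. -/
def ViabilityInvariant {S A : Type*} (T : S → A → S) (SF : Set S) (K : Set S) : Prop :=
  (∀ s ∈ K, s ∉ SF) ∧ ∀ s ∈ K, ∃ a, T s a ∈ K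

/-- The viability kernel: the maximal viability-invariant subset of `S \ SF`. -/
def viabilityKernel {S A : Type*} (T : S → A → S) (SF : Set S) : Set S :=
  ⋃₀ {K | ViabilityInvariant T SF K}

/-- `lenU T SF SU s` is the length (number of transitions) of the longest trajectory
starting at `s` that remains in `SU` and terminates upon entering `SF`. -/
noncomputable def lenU {S A : Type*} (T : S → A → S) (SF SU : Set S) (s : S) : ℕ :=
  sSup {k | ∃ act : ℕ → A,
    (∀ i < k, trajFrom T s act i ∈ SU) ∧ trajFrom T s act k ∈ SF}

section Trajectories

variable {S A : Type*} (T : S → A → S) (SF SU : Set S)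

def trajLengths (s : S) : Set ℕ :=
  {k | ∃ act : ℕ → A, (∀ i < k, trajFrom T s act i ∈ SU) ∧ trajFrom T s act k ∈ SF}

theorem lenU_eq_sSup_trajLengths (s : S) : lenU T SF SU s = sSup (trajLengths T SF SU s) :=
  rfl

variable {T}

theorem trajFrom_succ (s : S) (act : ℕ → A) (n : ℕ) :
    trajFrom T s act (n + 1) = trajFrom T (T s (act 0)) (fun i => act (i + 1)) n := by
  induction n with
  | zero => rfl
  | succ n ih => rw [trajFrom, ih, trajFrom]

variable {SF SU}

theorem succ_mem_trajLengths_iff {s : S} (hs : s ∈ SU) {k : ℕ} :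
    k + 1 ∈ trajLengths T SF SU s ↔ ∃ a, k ∈ trajLengths T SF SU (T s a) := by
  constructor
  · rintro ⟨act, hSU, hSF⟩
    refine ⟨act 0, fun i => act (i + 1), fun i hi => ?_, ?_⟩
    · rw [← trajFrom_succ]
      exact hSU (i + 1) (by omega)
    · rwa [← trajFrom_succ]
  · rintro ⟨a, act, hSU, hSF⟩
    refine ⟨Stream'.cons a act, fun i hi => ?_, ?_⟩
    · cases i with
      | zero => exact hs
      | succ i => exact trajFrom_succ s (Stream'.cons a act) i ▸ hSU i (by omega)
    · exact trajFrom_succ s (Stream'.cons a act) k ▸ hSF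

theorem trajFrom_mem_viabilityKernel_of_eq {s : S} {act : ℕ → A} {p q : ℕ} (hpq : p < q)
    (heq : trajFrom T s act p = trajFrom T s act q)
    (hSF : ∀ j, p ≤ j → j < q → trajFrom T s act j ∉ SF) :
    trajFrom T s act p ∈ viabilityKernel T SF := by
  refine ⟨trajFrom T s act '' Set.Ico p q, ⟨?_, ?_⟩, p, ⟨le_rfl, hpq⟩, rfl⟩
  · rintro _ ⟨j, ⟨hpj, hjq⟩, rfl⟩
    exact hSF j hpj hjq
  · rintro _ ⟨j, ⟨hpj, hjq⟩, rfl⟩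
    refine ⟨act j, ?_⟩
    rcases (Nat.succ_le_of_lt hjq).lt_or_eq with hlt | heq'
    · exact ⟨j + 1, ⟨by omega, hlt⟩, rfl⟩
    · exact ⟨p, ⟨le_rfl, hpq⟩, heq.trans (heq' ▸ rfl)⟩

variable (hSU : SU ⊆ (viabilityKernel T SF ∪ SF)ᶜ)
include hSU

theorem trajFrom_injOn_of_mem_trajLengths {s : S} {act : ℕ → A} {k : ℕ}
    (hSUk : ∀ i < k, trajFrom T s act i ∈ SU) (hSFk : trajFrom T s act k ∈ SF) :
    Set.InjOn (trajFrom T s act) (Set.Iic k) := by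
  have hSU' : ∀ i < k, trajFrom T s act i ∉ viabilityKernel T SF ∪ SF := fun i hi =>
    hSU (hSUk i hi)
  have hne : ∀ p q, p < q → q ≤ k → trajFrom T s act p ≠ trajFrom T s act q := by
    intro p q hpq hqk heq
    rcases hqk.lt_or_eq with hqk | rfl
    · exact hSU' p (hpq.trans hqk) <| Or.inl <| trajFrom_mem_viabilityKernel_of_eq hpq heq
        fun j _ hjq hj => hSU' j (hjq.trans hqk) (Or.inr hj)
    · exact hSU' p hpq (Or.inr (heq ▸ hSFk))
  intro p hp q hq heq
  rcases lt_trichotomy p q with hlt | rfl | hlt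
  · exact absurd heq (hne p q hlt hq)
  · rfl
  · exact absurd heq.symm (hne q p hlt hp)

theorem lt_card_of_mem_trajLengths [Fintype S] {s : S} {k : ℕ}
    (hk : k ∈ trajLengths T SF SU s) : k < Fintype.card S := by
  obtain ⟨act, hSUk, hSFk⟩ := hk
  have hinj : Function.Injective fun j : Fin (k + 1) => trajFrom T s act j :=
    fun p q h => Fin.ext <| trajFrom_injOn_of_mem_trajLengths hSU hSUk hSFk
      (Nat.lt_succ_iff.mp p.isLt) (Nat.lt_succ_iff.mp q.isLt) h
  simpa using Fintype.card_le_of_injective _ hinj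

theorem bddAbove_trajLengths [Fintype S] (s : S) : BddAbove (trajLengths T SF SU s) :=
  ⟨Fintype.card S, fun _ hk => (lt_card_of_mem_trajLengths hSU hk).le⟩

theorem exists_lenU_eq_of_lenU_eq_succ [Fintype S] {s : S} (hs : s ∈ SU) {k : ℕ} (hk : 1 ≤ k)
    (hlen : lenU T SF SU s = k + 1) : ∃ a, T s a ∈ SU ∧ lenU T SF SU (T s a) = k := by
  simp only [lenU_eq_sSup_trajLengths] at hlen ⊢
  have hmem : k + 1 ∈ trajLengths T SF SU s := by
    have hne : (trajLengths T SF SU s).Nonempty :=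
      Set.nonempty_iff_ne_empty.mpr fun h => by simp [h] at hlen
    exact hlen ▸ Nat.sSup_mem hne (bddAbove_trajLengths hSU s)
  obtain ⟨a, hka⟩ := (succ_mem_trajLengths_iff hs).mp hmem
  have haSU : T s a ∈ SU := by
    obtain ⟨act, hSUk, -⟩ := hka
    exact hSUk 0 hk
  refine ⟨a, haSU, le_antisymm ?_ (le_csSup (bddAbove_trajLengths hSU _) hka)⟩
  have hsucc : sSup (trajLengths T SF SU (T s a)) + 1 ∈ trajLengths T SF SU s :=
    (succ_mem_trajLengths_iff hs).mpr
      ⟨a, Nat.sSup_mem ⟨k, hka⟩ (bddAbove_trajLengths hSU _)⟩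
  have := le_csSup (bddAbove_trajLengths hSU s) hsucc
  omega

theorem exists_lenU_eq_of_le [Fintype S] {s : S} (hs : s ∈ SU) {i : ℕ} (hi : 1 ≤ i)
    (hle : i ≤ lenU T SF SU s) : ∃ s' ∈ SU, lenU T SF SU s' = i := by
  obtain ⟨d, hd⟩ := Nat.exists_eq_add_of_le hle
  induction d generalizing s with
  | zero => exact ⟨s, hs, hd⟩
  | succ d ih =>
    obtain ⟨a, haSU, ha⟩ :=
      exists_lenU_eq_of_lenU_eq_succ hSU hs (k := i + d) (by omega) (by omega)
    exact ih haSU (by omega) ha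

end Trajectories

theorem exists_state_of_each_length_general
    {S A : Type*} [Fintype S] (T : S → A → S) (SF : Set S)
    (SU : Set S) (hSU : SU = (viabilityKernel T SF ∪ SF)ᶜ)
    (hne : SU.Nonempty)
    (i : ℕ) (h1 : 1 ≤ i) (hL : i ≤ sSup ((fun s => lenU T SF SU s) '' SU)) :
    ∃ s ∈ SU, lenU T SF SU s = i := by
  obtain ⟨s, hs, hmax⟩ :=
    Nat.sSup_mem (hne.image _) (SU.toFinite.image (fun s => lenU T SF SU s)).bddAbove
  exact exists_lenU_eq_of_le hSU.subset hs h1 (hL.trans_eq hmax.symm)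

/-- If the set of unviable states `S_U` is nonempty (so `n = |S_U| ≥ 1`), then for every
integer `i` with `1 ≤ i ≤ L`, where `L` is the maximum over `s ∈ S_U` of the length of the
longest trajectory from `s`, there exists a state `s ∈ S_U` whose longest trajectory has
length exactly `i`. -/
theorem exists_state_of_each_length
    {S A : Type*} [Fintype S] (T : S → A → S) (SF : Set S)
    (SU : Set S) (hSU : SU = (viabilityKernel T SF ∪ SF)ᶜ)
    (hne : SU.Nonempty) (hn : 1 ≤ SU.ncard)
    (i : ℕ) (h1 : 1 ≤ i) (hL : i ≤ sSup ((fun s => lenU T SF SU s) '' SU)) :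
    ∃ s ∈ SU, lenU T SF SU s = i :=
  exists_state_of_each_length_general T SF SU hSU hne i h1 hL
end

section
/- A state s belongs to the viability kernel S_V if and only if there exists an infinite sequence of actions (a_0, a_1, ...) such that every state along the induced trajectory avoids the failure set S_F. -/
/-!
A viability-invariant set comes with an action selector keeping the state inside it; following
that selector from `s` gives an action sequence whose trajectory stays in the set and therefore
avoids the failure set. Conversely, the states admitting a forever-avoiding action sequence form a
viability-invariant set: dropping the first action of such a sequence for `s` gives one for the
successor state.
-/

section Trajectory

variable {S A : Type*} (T : S → A → S)

theorem trajFrom_succ_eq_trajFrom_tail (s : S) (act : ℕ → A) (i : ℕ) :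
    trajFrom T s act (i + 1) = trajFrom T (T s (act 0)) (fun n => act (n + 1)) i := by
  induction i with
  | zero => rfl
  | succ i ih => rw [trajFrom, ih, trajFrom]

theorem exists_trajFrom_mem_of_forall_exists {K : Set S} (hK : ∀ s ∈ K, ∃ a, T s a ∈ K)
    {s : S} (hs : s ∈ K) : ∃ act : ℕ → A, ∀ i, trajFrom T s act i ∈ K := by
  choose select hselect using hK
  let step : K → K := fun x => ⟨T x (select x x.2), hselect x x.2⟩
  let states : ℕ → K := fun i => step^[i] ⟨s, hs⟩
  have traj_eq : ∀ i, trajFrom T s (fun i => select _ (states i).2) i = states i := by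
    intro i
    induction i with
    | zero => rfl
    | succ i ih =>
      simp only [trajFrom, ih, states, Function.iterate_succ_apply']
      rfl
  exact ⟨fun i => select _ (states i).2, fun i => traj_eq i ▸ (states i).2⟩

theorem viabilityInvariant_setOf_forall_trajFrom_notMem (SF : Set S) :
    ViabilityInvariant T SF {s | ∃ act : ℕ → A, ∀ i, trajFrom T s act i ∉ SF} := by
  refine ⟨fun s ⟨act, hact⟩ => hact 0, fun s ⟨act, hact⟩ => ⟨act 0, fun n => act (n + 1), ?_⟩⟩
  intro i
  rw [← trajFrom_succ_eq_trajFrom_tail]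
  exact hact (i + 1)

end Trajectory

/-- A state belongs to the viability kernel iff there exists an infinite action sequence
whose induced trajectory avoids the failure set forever. -/
theorem mem_kernel_iff_forever_avoiding
    {S A : Type*} (T : S → A → S) (SF : Set S) (s : S) :
    s ∈ viabilityKernel T SF ↔
      ∃ act : ℕ → A, ∀ i : ℕ, trajFrom T s act i ∉ SF := by
  constructor
  · rintro ⟨K, ⟨hK_avoid, hK_step⟩, hsK⟩
    obtain ⟨act, hact⟩ := exists_trajFrom_mem_of_forall_exists T hK_step hsK
    exact ⟨act, fun i => hK_avoid _ (hact i)⟩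
  · intro h
    exact ⟨_, viabilityInvariant_setOf_forall_trajFrom_notMem T SF, h⟩
end

section
/- For a finite state space, a state s ∉ S_F belongs to the viability kernel if and only if failure can be avoided for n steps, where n = |S|: that is, s ∈ S_V iff there exist actions a_0,...,a_{n−1} such that the induced trajectory s_0 = s, s_{i+1} = T(s_i, a_i) satisfies s_i ∉ S_F for all i ≤ n. -/
section

variable {S A : Type*} {T : S → A → S} {SF K : Set S}

theorem trajFrom_feedback (T : S → A → S) (π : S → A) (t : S) (k : ℕ) :
    trajFrom T t (fun m => π ((fun u => T u (π u))^[m] t)) k = (fun u => T u (π u))^[k] t := by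
  induction k with
  | zero => rfl
  | succ k ih => rw [trajFrom, ih, Function.iterate_succ_apply']

theorem ViabilityInvariant.exists_trajFrom_mem (hK : ViabilityInvariant T SF K) {t : S}
    (ht : t ∈ K) : ∃ act : ℕ → A, ∀ k, trajFrom T t act k ∈ K := by
  obtain ⟨a₀, -⟩ := hK.2 t ht
  have hlaw : ∀ u, ∃ a, u ∈ K → T u a ∈ K := fun u => by
    by_cases hu : u ∈ K
    · obtain ⟨a, ha⟩ := hK.2 u hu
      exact ⟨a, fun _ => ha⟩
    · exact ⟨a₀, fun h => absurd h hu⟩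
  choose π hπ using hlaw
  refine ⟨fun m => π ((fun u => T u (π u))^[m] t), fun k => ?_⟩
  rw [trajFrom_feedback]
  exact Set.MapsTo.iterate (fun u hu => hπ u hu) k ht

theorem viabilityInvariant_trajFrom_image_Iio {s : S} {act : ℕ → A} {i j : ℕ} (hij : i < j)
    (hret : trajFrom T s act i = trajFrom T s act j) (hsafe : ∀ m < j, trajFrom T s act m ∉ SF) :
    ViabilityInvariant T SF (trajFrom T s act '' Set.Iio j) := by
  refine ⟨fun _ ⟨m, hm, hmt⟩ => hmt ▸ hsafe m hm, ?_⟩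
  rintro _ ⟨m, hm, rfl⟩
  refine ⟨act m, ?_⟩
  rcases (Nat.succ_le_of_lt hm).lt_or_eq with hlt | heq
  · exact ⟨m + 1, hlt, rfl⟩
  · exact ⟨i, hij, by rw [hret, ← heq]; rfl⟩

theorem exists_trajFrom_eq_of_le_card [Fintype S] (T : S → A → S) (s : S) (act : ℕ → A) :
    ∃ i j, i < j ∧ j ≤ Fintype.card S ∧ trajFrom T s act i = trajFrom T s act j := by
  obtain ⟨i, j, hne, heq⟩ := Fintype.exists_ne_map_eq_of_card_lt
    (fun k : Fin (Fintype.card S + 1) => trajFrom T s act k) (by simp)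
  rcases hne.lt_or_gt with h | h
  · exact ⟨i, j, h, Nat.lt_succ_iff.mp j.2, heq⟩
  · exact ⟨j, i, h, Nat.lt_succ_iff.mp i.2, heq.symm⟩

end

theorem mem_kernel_iff_avoid_card_steps_general
    {S A : Type*} [Fintype S] (T : S → A → S) (SF : Set S) (s : S) :
    s ∈ viabilityKernel T SF ↔
      ∃ act : ℕ → A, ∀ i ≤ Fintype.card S, trajFrom T s act i ∉ SF := by
  constructor
  · rintro ⟨K, hK, hsK⟩
    obtain ⟨act, hact⟩ := hK.exists_trajFrom_mem hsK
    exact ⟨act, fun i _ => hK.1 _ (hact i)⟩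
  · rintro ⟨act, hact⟩
    obtain ⟨i, j, hij, hjn, hret⟩ := exists_trajFrom_eq_of_le_card T s act
    have hK := viabilityInvariant_trajFrom_image_Iio hij hret fun m hm => hact m (by omega)
    exact ⟨_, hK, 0, Nat.zero_lt_of_lt hij, rfl⟩

/-- For a finite state space with `n = |S|`, a state `s ∉ S_F` is in the viability kernel
iff failure can be avoided for `n` steps: there are actions whose induced trajectory
`s_0 = s, s_{i+1} = T(s_i, a_i)` satisfies `s_i ∉ S_F` for all `i ≤ n`. -/
theorem mem_kernel_iff_avoid_card_steps
    {S A : Type*} [Fintype S] (T : S → A → S) (SF : Set S) (s : S) (hs : s ∉ SF) :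
    s ∈ viabilityKernel T SF ↔
      ∃ act : ℕ → A, ∀ i ≤ Fintype.card S, trajFrom T s act i ∉ SF :=
  mem_kernel_iff_avoid_card_steps_general T SF s
end

section
/- If the agent starts at a state s ∈ S_λ and always selects actions from Q_λ when available, then such actions are indeed always available, and the induced trajectory remains in S_λ forever: sampling from Q_λ maps the system to a state in S_λ, from which Q_λ is again nonempty. -/
/-- The safety measure: the (counting) measure of the viable actions at state `s`. -/
noncomputable def safetyMeasure {S A : Type*} (T : S → A → S) (SF : Set S) (s : S) : ℕ :=
  {a : A | T s a ∈ viabilityKernel T SF}.ncard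

/-! The viability kernel is itself viability-invariant, so an action leading into it leads to a
state that again has such an action; for finitely many actions, a positive safety measure says
exactly that such an action exists. Hence `{s | 0 < Λ s}` is forward invariant under a suitable
choice of actions, and a feedback policy choosing them keeps the trajectory inside it. -/

theorem exists_forall_trajFrom_mem {S A : Type*} (T : S → A → S) {P : Set S}
    (hP : ∀ s ∈ P, ∃ a, T s a ∈ P) {s : S} (hs : s ∈ P) :
    ∃ act : ℕ → A, ∀ i, trajFrom T s act i ∈ P := by
  choose f hf using fun t : P => hP t t.2
  let step : P → P := fun t => ⟨T t (f t), hf t⟩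
  refine ⟨fun i => f (step^[i] ⟨s, hs⟩), fun i => ?_⟩
  suffices h : trajFrom T s (fun i => f (step^[i] ⟨s, hs⟩)) i = step^[i] ⟨s, hs⟩ from
    h ▸ (step^[i] ⟨s, hs⟩).2
  induction i with
  | zero => rfl
  | succ i ih => rw [Function.iterate_succ_apply', trajFrom, ih]

theorem exists_mem_viabilityKernel_of_mem {S A : Type*} (T : S → A → S) (SF : Set S) {s : S}
    (hs : s ∈ viabilityKernel T SF) : ∃ a, T s a ∈ viabilityKernel T SF := by
  obtain ⟨K, hK, hsK⟩ := hs
  obtain ⟨a, ha⟩ := hK.2 s hsK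
  exact ⟨a, K, hK, ha⟩

theorem safetyMeasure_pos_iff {S A : Type*} [Finite A] (T : S → A → S) (SF : Set S) {s : S} :
    0 < safetyMeasure T SF s ↔ ∃ a, T s a ∈ viabilityKernel T SF :=
  Set.ncard_pos (Set.toFinite _)

theorem safetyMeasure_pos_of_mem_viabilityKernel {S A : Type*} [Finite A] (T : S → A → S)
    (SF : Set S) {s : S} (hs : s ∈ viabilityKernel T SF) : 0 < safetyMeasure T SF s :=
  (safetyMeasure_pos_iff T SF).2 (exists_mem_viabilityKernel_of_mem T SF hs)

theorem exists_safetyMeasure_pos_step {S A : Type*} [Finite A] (T : S → A → S) (SF : Set S)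
    {s : S} (hs : 0 < safetyMeasure T SF s) : ∃ a, 0 < safetyMeasure T SF (T s a) :=
  let ⟨a, ha⟩ := (safetyMeasure_pos_iff T SF).1 hs
  ⟨a, safetyMeasure_pos_of_mem_viabilityKernel T SF ha⟩

theorem safe_actions_always_available_general
    {S A : Type*} [Finite A] (T : S → A → S) (SF : Set S)
    (s : S) (hs : 0 < safetyMeasure T SF s) :
    ∃ act : ℕ → A, ∀ i : ℕ,
      0 < safetyMeasure T SF (trajFrom T s act i) ∧
      0 < safetyMeasure T SF (T (trajFrom T s act i) (act i)) := by
  obtain ⟨act, hact⟩ := exists_forall_trajFrom_mem T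
    (P := {t | 0 < safetyMeasure T SF t}) (fun _ ht => exists_safetyMeasure_pos_step T SF ht) hs
  exact ⟨act, fun i => ⟨hact i, hact (i + 1)⟩⟩

/-- Starting from a state in the zero safe level set `S_0` (i.e. `Λ(s) > 0`), actions in
`Q_0` (i.e. with `Λ_Q(s,a) = Λ(T(s,a)) > 0`) are always available, and by always selecting
such actions the induced trajectory remains in `S_0` forever. (Failure states are
absorbing.) -/
theorem safe_actions_always_available
    {S A : Type*} [Finite A] (T : S → A → S) (SF : Set S)
    (habs : ∀ s ∈ SF, ∀ a : A, T s a ∈ SF)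
    (s : S) (hs : 0 < safetyMeasure T SF s) :
    ∃ act : ℕ → A, ∀ i : ℕ,
      0 < safetyMeasure T SF (trajFrom T s act i) ∧
      0 < safetyMeasure T SF (T (trajFrom T s act i) (act i)) :=
  safe_actions_always_available_general T SF s hs
end

section
/- If the initial estimate is optimistic, Λ̂⁰(s) ≥ Λ(s) for all s, and updates are Λ̂_Q(s,a) ← 0 on observed failure and Λ̂_Q(s,a) ← Λ̂(T(s,a)) otherwise (with Λ̂(s) = |{a : Λ̂_Q(s,a) > 0}|), then under infinite sampling of all state-action pairs the estimate Λ̂_Q converges to the true Λ_Q on all of S × A: after finitely many sweeps, Λ̂_Q(q) = 0 exactly on Q_V^c, and consequently Λ̂ = Λ and Λ̂_Q = Λ_Q everywhere. -/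
/-! The viability kernel is the greatest fixed point of `K ↦ {s ∉ S_F | ∃ a, T s a ∈ K}`. On a
finite state space the decreasing iterates of this map from the full set (the states that can
avoid failure for `t` steps) reach it after finitely many steps `N`. By induction on sweeps,
optimism persists on `Q_V` (a viable successor has a viable action, whose estimate is positive),
while `Λ̂_Q` vanishes after `t` sweeps on every pair whose successor cannot avoid failure for `t`
steps. So from sweep `N` on `Λ̂_Q` vanishes exactly off `Q_V`, which gives `Λ̂ = Λ`, and one
more sweep gives `Λ̂_Q = Λ_Q`. -/

theorem OrderHom.exists_iterate_top_eq_gfp {α : Type*} [CompleteLattice α] [WellFoundedLT α]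
    (f : α →o α) : ∃ N, ∀ k, N ≤ k → f^[k] ⊤ = f.gfp := by
  have gfp_le_iterate : ∀ k, f.gfp ≤ f^[k] ⊤ := by
    intro k
    induction k with
    | zero => exact le_top
    | succ k ih =>
      rw [Function.iterate_succ_apply']
      exact f.map_gfp ▸ f.mono ih
  obtain ⟨N, hN⟩ := WellFoundedLT.antitone_chain_condition
    (f.mono.antitone_iterate_of_map_le (le_top : f ⊤ ≤ ⊤))
  have hfixed : f (f^[N] ⊤) = f^[N] ⊤ := by
    rw [← Function.iterate_succ_apply' f N, ← hN (N + 1) N.le_succ]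
  refine ⟨N, fun k hk => ?_⟩
  rw [← hN k hk]
  exact le_antisymm (f.le_gfp hfixed.ge) (gfp_le_iterate N)

section Viability

variable {S A : Type*} (T : S → A → S) (SF : Set S)

def viablePre : Set S →o Set S where
  toFun K := {s | s ∉ SF ∧ ∃ a, T s a ∈ K}
  monotone' _ _ hKL _ := fun ⟨hs, a, ha⟩ => ⟨hs, a, hKL ha⟩

theorem viabilityInvariant_iff_subset_viablePre (K : Set S) :
    ViabilityInvariant T SF K ↔ K ⊆ viablePre T SF K :=
  ⟨fun ⟨hsafe, hstep⟩ s hs => ⟨hsafe s hs, hstep s hs⟩,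
    fun h => ⟨fun _ hs => (h hs).1, fun _ hs => (h hs).2⟩⟩

theorem viabilityKernel_eq_gfp : viabilityKernel T SF = (viablePre T SF).gfp := by
  simp only [viabilityKernel, OrderHom.gfp, viabilityInvariant_iff_subset_viablePre]
  rfl

theorem viabilityKernel_subset_viablePre :
    viabilityKernel T SF ⊆ viablePre T SF (viabilityKernel T SF) := by
  rw [viabilityKernel_eq_gfp, OrderHom.map_gfp]

variable {T SF}

theorem safetyMeasure_eq_zero_of_mem (habs : ∀ s ∈ SF, ∀ a : A, T s a ∈ SF) {s : S}
    (hs : s ∈ SF) : safetyMeasure T SF s = 0 := by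
  have hnone : {a : A | T s a ∈ viabilityKernel T SF} = ∅ :=
    Set.eq_empty_of_forall_notMem fun a ha =>
      (viabilityKernel_subset_viablePre T SF ha).1 (habs s hs a)
  rw [safetyMeasure, hnone, Set.ncard_empty]

theorem card_filter_ne_zero_eq_safetyMeasure [Fintype A] {s : S} (f : A → ℕ)
    (hf : ∀ a, f a = 0 ↔ T s a ∉ viabilityKernel T SF) :
    (Finset.univ.filter (fun a => f a ≠ 0)).card = safetyMeasure T SF s := by
  rw [safetyMeasure, ← Set.ncard_coe_finset]
  congr
  ext a
  simp [hf]

end Viability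

section Estimate

variable {S A : Type*} [Fintype A] {T : S → A → S} {SF : Set S} [DecidablePred (· ∈ SF)]
  {Est : ℕ → S × A → ℕ}
  (hsweep : ∀ t (q : S × A), Est (t + 1) q =
    if T q.1 q.2 ∈ SF then 0
    else (Finset.univ.filter (fun a => Est t (T q.1 q.2, a) ≠ 0)).card)
include hsweep

theorem estimate_ne_zero_of_mem_viabilityKernel
    (hopt : ∀ q : S × A, T q.1 q.2 ∈ viabilityKernel T SF → Est 0 q ≠ 0) :
    ∀ t (q : S × A), T q.1 q.2 ∈ viabilityKernel T SF → Est t q ≠ 0 := by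
  intro t
  induction t with
  | zero => exact hopt
  | succ t ih =>
    intro q hq
    obtain ⟨hsafe, a, ha⟩ := viabilityKernel_subset_viablePre T SF hq
    rw [hsweep, if_neg hsafe]
    exact Finset.card_ne_zero_of_mem (Finset.mem_filter.2 ⟨Finset.mem_univ a, ih _ ha⟩)

theorem estimate_eq_zero_of_not_mem_iterate :
    ∀ t (q : S × A), T q.1 q.2 ∉ (viablePre T SF)^[t] ⊤ → Est t q = 0 := by
  intro t
  induction t with
  | zero => exact fun q hq => absurd trivial hq
  | succ t ih =>
    intro q hq
    rw [Function.iterate_succ_apply'] at hq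
    rw [hsweep]
    split_ifs with hfail
    · rfl
    · rw [Finset.card_eq_zero, Finset.filter_eq_empty_iff]
      exact fun a _ => not_not.2 (ih _ fun ha => hq ⟨hfail, a, ha⟩)

end Estimate

/-- With an optimistic initialization (`Λ̂⁰_Q(q) > 0` for all viable `q`) and sweeps that
update every state-action pair (`0` on observed failure, `Λ̂(T(q))` otherwise, where
`Λ̂(s) = |{a : Λ̂_Q(s,a) > 0}|`), after finitely many sweeps `Λ̂_Q` vanishes exactly on the
complement of the viable set, `Λ̂ = Λ`, and `Λ̂_Q = Λ_Q` everywhere. (Failure states are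
absorbing.) -/
theorem optimistic_estimate_converges
    {S A : Type*} [Fintype S] [Fintype A]
    (T : S → A → S) (SF : Set S) [DecidablePred (· ∈ SF)]
    (habs : ∀ s ∈ SF, ∀ a : A, T s a ∈ SF)
    (Est : ℕ → S × A → ℕ)
    (hopt : ∀ q : S × A, T q.1 q.2 ∈ viabilityKernel T SF → Est 0 q ≠ 0)
    (hsweep : ∀ t (q : S × A), Est (t + 1) q =
      if T q.1 q.2 ∈ SF then 0
      else (Finset.univ.filter (fun a => Est t (T q.1 q.2, a) ≠ 0)).card) :
    ∃ N : ℕ, ∀ t, N ≤ t →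
      (∀ q : S × A, (Est t q = 0 ↔ T q.1 q.2 ∉ viabilityKernel T SF)) ∧
      (∀ s : S, (Finset.univ.filter (fun a => Est t (s, a) ≠ 0)).card
        = safetyMeasure T SF s) ∧
      (∀ q : S × A, Est t q = safetyMeasure T SF (T q.1 q.2)) := by
  obtain ⟨N, hN⟩ := (viablePre T SF).exists_iterate_top_eq_gfp
  have hzero : ∀ t, N ≤ t → ∀ q : S × A, Est t q = 0 ↔ T q.1 q.2 ∉ viabilityKernel T SF := by
    intro t ht q
    refine ⟨fun h hq => estimate_ne_zero_of_mem_viabilityKernel hsweep hopt t q hq h,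
      fun hq => estimate_eq_zero_of_not_mem_iterate hsweep t q ?_⟩
    rwa [hN t ht, ← viabilityKernel_eq_gfp]
  have hcount : ∀ t, N ≤ t → ∀ s : S,
      (Finset.univ.filter (fun a => Est t (s, a) ≠ 0)).card = safetyMeasure T SF s :=
    fun t ht s => card_filter_ne_zero_eq_safetyMeasure _ fun a => hzero t ht (s, a)
  refine ⟨N + 1, fun t ht => ⟨hzero t (by omega), hcount t (by omega), fun q => ?_⟩⟩
  obtain ⟨u, rfl⟩ : ∃ u, t = u + 1 := ⟨t - 1, by omega⟩
  rw [hsweep]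
  split_ifs with hfail
  · exact (safetyMeasure_eq_zero_of_mem habs hfail).symm
  · exact hcount u (by omega) _
end
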